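/- arXiv:2503.12431 — 2 statements merged into one kernel-verified Lean document; each statement's English description precedes it below -/
import Mathlib

section
/- Let n ≥ 1 and parameters α_i ≥ 1, γ_i ≥ 1, β_i > 0 with α_j + β_j ≥ 2 for some j. If (e − 1)·∏_{i=1}^n [Γ(β_i)]^{γ_i} < ∏_{i=1}^n [Γ(α_i + β_i)]^{γ_i}, then the normalized multi-index Le Roy type function 𝔽(z) = z + ∑_{k=1}^∞ A_{k+1} z^{k+1}, with A_{k+1} = ∏_i[Γ(β_i)]^{γ_i} / ∏_i[Γ(α_i k + β_i)]^{γ_i}, satisfies |𝔽(z)/z − 1| < 1 for all 0 < |z| < 1. -/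
/-!
For `P m = ∏ i, Γ(α i * m + β i) ^ γ i`, the recursion `Γ(x + 1) = x Γ(x)` together with the
monotonicity of `Γ` on `[2, ∞)` gives `(m + 1) * P m ≤ P (m + 1)` for `m ≥ 1`; the factor `m + 1`
comes from the index `j` with `α j * m + β j ≥ m + 1`. Hence `A (k + 1) ≤ θ / k!` with
`θ = P 0 / P 1`, and for `|z| ≤ 1` the series is dominated by `θ * (e - 1) < 1`.
-/

open Real Finset Nat

theorem Real.hasSum_inv_factorial_succ :
    HasSum (fun k : ℕ => ((k + 1)! : ℝ)⁻¹) (exp 1 - 1) := by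
  have h := NormedSpace.expSeries_div_hasSum_exp (1 : ℝ)
  rw [← Real.exp_eq_exp_ℝ, ← hasSum_nat_add_iff' 1] at h
  simpa using h

theorem norm_tsum_mul_pow_succ_le {𝕜 : Type*} [NormedDivisionRing 𝕜] (a : ℕ → 𝕜) {θ : ℝ}
    (ha : ∀ k, ‖a k‖ ≤ θ / (k + 1)!) {z : 𝕜} (hz : ‖z‖ ≤ 1) :
    ‖∑' k, a k * z ^ (k + 1)‖ ≤ θ * (exp 1 - 1) := by
  refine tsum_of_norm_bounded (Real.hasSum_inv_factorial_succ.mul_left θ) fun k => ?_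
  rw [norm_mul, norm_pow, ← div_eq_mul_inv]
  exact (mul_le_of_le_one_right (norm_nonneg _) (pow_le_one₀ (norm_nonneg z) hz)).trans (ha k)

theorem add_tsum_mul_pow_div_sub_one {K : Type*} [Field K] [TopologicalSpace K]
    [IsTopologicalRing K] [T2Space K] (c : ℕ → K) {z : K} (hz : z ≠ 0) :
    (z + ∑' k, c k * z ^ (k + 2)) / z - 1 = ∑' k, c k * z ^ (k + 1) := by
  have h : ∑' k, c k * z ^ (k + 2) = (∑' k, c k * z ^ (k + 1)) * z := by
    rw [← tsum_mul_right]
    simp only [pow_succ, mul_assoc]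
  rw [h, add_div, div_self hz, mul_div_cancel_right₀ _ hz, add_sub_cancel_left]

theorem Real.mul_Gamma_le_Gamma {x y : ℝ} (hx : 1 ≤ x) (hxy : x + 1 ≤ y) :
    x * Gamma x ≤ Gamma y := by
  rw [← Gamma_add_one (by positivity)]
  exact Gamma_strictMonoOn_Ici.monotoneOn (by simp; linarith) (by simp; linarith) hxy

theorem factorial_mul_le_of_succ_mul_le {f : ℕ → ℝ}
    (hf : ∀ m : ℕ, 1 ≤ m → ((m : ℝ) + 1) * f m ≤ f (m + 1)) (k : ℕ) :
    (k + 1)! * f 1 ≤ f (k + 1) := by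
  induction k with
  | zero => simp
  | succ k ih =>
    calc ((k + 2)! : ℝ) * f 1 = (k + 2 : ℝ) * ((k + 1)! * f 1) := by
          rw [factorial_succ]; push_cast; ring
      _ ≤ (k + 2 : ℝ) * f (k + 1) := by gcongr
      _ ≤ f (k + 2) := by exact_mod_cast hf (k + 1) (by omega)

noncomputable def leRoyGammaProd {n : ℕ} (α β γ : Fin n → ℝ) (m : ℕ) : ℝ :=
  ∏ i, Gamma (α i * m + β i) ^ γ i

section LeRoy

variable {n : ℕ} {α β γ : Fin n → ℝ}

theorem leRoyGammaProd_pos (hα : ∀ i, 0 ≤ α i) (hβ : ∀ i, 0 < β i) (m : ℕ) :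
    0 < leRoyGammaProd α β γ m :=
  prod_pos fun i _ => rpow_pos_of_pos
    (Gamma_pos_of_pos (add_pos_of_nonneg_of_pos (mul_nonneg (hα i) m.cast_nonneg) (hβ i))) _

theorem succ_mul_leRoyGammaProd_le (hα : ∀ i, 1 ≤ α i) (hγ : ∀ i, 1 ≤ γ i) (hβ : ∀ i, 0 < β i)
    {j : Fin n} (hj : 2 ≤ α j + β j) {m : ℕ} (hm : 1 ≤ m) :
    ((m : ℝ) + 1) * leRoyGammaProd α β γ m ≤ leRoyGammaProd α β γ (m + 1) := by
  set x : Fin n → ℝ := fun i => α i * m + β i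
  have hm' : (1 : ℝ) ≤ m := by exact_mod_cast hm
  have hx : ∀ i, 1 ≤ x i := fun i => by nlinarith [hα i, hβ i]
  have hΓ : ∀ i, 0 < Gamma (x i) := fun i => Gamma_pos_of_pos (by linarith [hx i])
  have hstep : ∀ i, x i ^ γ i * Gamma (x i) ^ γ i ≤ Gamma (α i * (m + 1 : ℕ) + β i) ^ γ i := by
    intro i
    rw [← mul_rpow (by linarith [hx i]) (hΓ i).le]
    refine rpow_le_rpow (mul_nonneg (by linarith [hx i]) (hΓ i).le)
      (mul_Gamma_le_Gamma (hx i) ?_) (by linarith [hγ i])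
    push_cast; nlinarith [hα i]
  have hsucc : (m : ℝ) + 1 ≤ ∏ i, x i ^ γ i := by
    have hone : ∀ i, 1 ≤ x i ^ γ i := fun i => one_le_rpow (hx i) (by linarith [hγ i])
    calc (m : ℝ) + 1 ≤ x j := by nlinarith [hα j]
      _ ≤ x j ^ γ j := self_le_rpow_of_one_le (hx j) (hγ j)
      _ ≤ ∏ i, x i ^ γ i := by
        rw [← mul_prod_erase univ _ (mem_univ j)]
        exact le_mul_of_one_le_right (by linarith [hone j]) (one_le_prod fun i _ => hone i)
  calc ((m : ℝ) + 1) * leRoyGammaProd α β γ m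
      ≤ (∏ i, x i ^ γ i) * leRoyGammaProd α β γ m :=
        mul_le_mul_of_nonneg_right hsucc (leRoyGammaProd_pos (fun i => by linarith [hα i]) hβ m).le
    _ ≤ leRoyGammaProd α β γ (m + 1) := by
        rw [leRoyGammaProd, ← prod_mul_distrib]
        exact prod_le_prod (fun i _ => mul_nonneg (rpow_nonneg (by linarith [hx i]) _)
          (rpow_nonneg (hΓ i).le _)) fun i _ => hstep i

theorem factorial_mul_leRoyGammaProd_one_le (hα : ∀ i, 1 ≤ α i) (hγ : ∀ i, 1 ≤ γ i)
    (hβ : ∀ i, 0 < β i) {j : Fin n} (hj : 2 ≤ α j + β j) (k : ℕ) :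
    (k + 1)! * leRoyGammaProd α β γ 1 ≤ leRoyGammaProd α β γ (k + 1) :=
  factorial_mul_le_of_succ_mul_le (fun _ hm => succ_mul_leRoyGammaProd_le hα hγ hβ hj hm) k

end LeRoy

theorem multi_leroy_mcgregor_bound_general (n : ℕ)
    (α β γ : Fin n → ℝ)
    (hα : ∀ i, 1 ≤ α i) (hγ : ∀ i, 1 ≤ γ i) (hβ : ∀ i, 0 < β i)
    (hj : ∃ j, 2 ≤ α j + β j)
    (hcond : (Real.exp 1 - 1) * ∏ i, (Real.Gamma (β i)) ^ γ i <
      ∏ i, (Real.Gamma (α i + β i)) ^ γ i) :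
    ∀ z : ℂ, 0 < ‖z‖ → ‖z‖ < 1 →
      ‖((z + ∑' k : ℕ,
            ((∏ i, (Real.Gamma (β i)) ^ γ i) /
              (∏ i, (Real.Gamma (α i * (k + 1 : ℕ) + β i)) ^ γ i) : ℝ) * z ^ (k + 2)) / z
          - 1)‖ < 1 := by
  intro z hz0 hz1
  obtain ⟨j, hj⟩ := hj
  set B : ℝ := ∏ i, Gamma (β i) ^ γ i
  set θ : ℝ := B / leRoyGammaProd α β γ 1
  have hB : 0 < B := prod_pos fun i _ => rpow_pos_of_pos (Gamma_pos_of_pos (hβ i)) _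
  have hP := leRoyGammaProd_pos (α := α) (γ := γ) (fun i => by linarith [hα i]) hβ
  have hθ : θ * (exp 1 - 1) < 1 := by
    rw [div_mul_eq_mul_div, div_lt_one (hP 1), mul_comm]
    simpa [leRoyGammaProd] using hcond
  have hcoeff : ∀ k : ℕ, ‖((B / leRoyGammaProd α β γ (k + 1) : ℝ) : ℂ)‖ ≤ θ / (k + 1)! := by
    intro k
    rw [Complex.norm_real, norm_of_nonneg (div_pos hB (hP _)).le, div_div, mul_comm]
    exact div_le_div_of_nonneg_left hB.le (mul_pos (by positivity) (hP 1))
      (factorial_mul_leRoyGammaProd_one_le hα hγ hβ hj k)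
  change ‖(z + ∑' k, ((B / leRoyGammaProd α β γ (k + 1) : ℝ) : ℂ) * z ^ (k + 2)) / z - 1‖ < 1
  rw [add_tsum_mul_pow_div_sub_one _ (norm_pos_iff.mp hz0)]
  exact (norm_tsum_mul_pow_succ_le _ hcoeff hz1.le).trans_lt hθ

theorem multi_leroy_mcgregor_bound (n : ℕ) (hn : 1 ≤ n)
    (α β γ : Fin n → ℝ)
    (hα : ∀ i, 1 ≤ α i) (hγ : ∀ i, 1 ≤ γ i) (hβ : ∀ i, 0 < β i)
    (hj : ∃ j, 2 ≤ α j + β j)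
    (hcond : (Real.exp 1 - 1) * ∏ i, (Real.Gamma (β i)) ^ γ i <
      ∏ i, (Real.Gamma (α i + β i)) ^ γ i) :
    ∀ z : ℂ, 0 < ‖z‖ → ‖z‖ < 1 →
      ‖((z + ∑' k : ℕ,
            ((∏ i, (Real.Gamma (β i)) ^ γ i) /
              (∏ i, (Real.Gamma (α i * (k + 1 : ℕ) + β i)) ^ γ i) : ℝ) * z ^ (k + 2)) / z
          - 1)‖ < 1 :=
  multi_leroy_mcgregor_bound_general n α β γ hα hγ hβ hj hcond
end

section
/- Let f be analytic on the unit disk with f(0) = 0, f'(0) = 1, and |f'(z) − 1| < 1 for all |z| < 1. Then f is convex in the disk {z : |z| < 1/2}, i.e. Re(1 + z f''(z)/f'(z)) > 0 for |z| < 1/2. -/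
/-!
Put `g = f' - 1`. It maps the unit disk into itself and fixes `0`, so Schwarz's lemma gives
`|g z| ≤ |z|` and the Schwarz–Pick lemma gives `|g' z| (1 - |z|²) ≤ 1 - |g z|²`. Together these yield
`|z| |f'' z| ≤ |z| (1 - |g z|) / (1 - |z|) < 1 - |g z| ≤ |f' z|` for `|z| < 1/2`, so
`w = z f''(z) / f'(z)` lies in the unit disk and `Re (1 + w) > 0`.
-/

open Metric Set Complex ComplexConjugate

noncomputable def diskMobius (a w : ℂ) : ℂ := (w + a) / (1 + conj a * w)

section diskMobius

variable {a w : ℂ}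

@[simp] lemma diskMobius_zero_right (a : ℂ) : diskMobius a 0 = a := by simp [diskMobius]

@[simp] lemma diskMobius_neg_self (a : ℂ) : diskMobius (-a) a = 0 := by simp [diskMobius]

lemma one_add_conj_mul_ne_zero (ha : ‖a‖ < 1) (hw : ‖w‖ < 1) : 1 + conj a * w ≠ 0 := by
  intro h
  have : ‖conj a * w‖ = 1 := by rw [← neg_eq_of_add_eq_zero_right h]; simp
  rw [norm_mul, Complex.norm_conj] at this
  nlinarith [norm_nonneg a, norm_nonneg w]

lemma sq_norm_add_add_mul_one_sub_sq_norm (a w : ℂ) :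
    ‖w + a‖ ^ 2 + (1 - ‖a‖ ^ 2) * (1 - ‖w‖ ^ 2) = ‖1 + conj a * w‖ ^ 2 := by
  simp only [Complex.sq_norm, Complex.normSq_apply, Complex.add_re, Complex.add_im,
    Complex.mul_re, Complex.mul_im, Complex.one_re, Complex.one_im, Complex.conj_re,
    Complex.conj_im]
  ring

lemma norm_diskMobius_lt_one (ha : ‖a‖ < 1) (hw : ‖w‖ < 1) : ‖diskMobius a w‖ < 1 := by
  have hden := one_add_conj_mul_ne_zero ha hw
  have hsq : ‖w + a‖ ^ 2 < ‖1 + conj a * w‖ ^ 2 := by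
    have : 0 < (1 - ‖a‖ ^ 2) * (1 - ‖w‖ ^ 2) := by
      apply mul_pos <;> nlinarith [norm_nonneg a, norm_nonneg w]
    linarith [sq_norm_add_add_mul_one_sub_sq_norm a w]
  rw [diskMobius, norm_div, div_lt_one (norm_pos_iff.mpr hden)]
  exact lt_of_pow_lt_pow_left₀ 2 (norm_nonneg _) hsq

lemma mapsTo_diskMobius (ha : ‖a‖ < 1) : MapsTo (diskMobius a) (ball 0 1) (ball 0 1) :=
  fun _ hw ↦ mem_ball_zero_iff.mpr (norm_diskMobius_lt_one ha (mem_ball_zero_iff.mp hw))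

lemma hasDerivAt_diskMobius (h : 1 + conj a * w ≠ 0) :
    HasDerivAt (diskMobius a) ((1 - conj a * a) / (1 + conj a * w) ^ 2) w := by
  have hd := ((hasDerivAt_id' w).add_const a).div
    (((hasDerivAt_id' w).const_mul (conj a)).const_add 1) h
  rwa [show 1 * (1 + conj a * w) - (w + a) * (conj a * 1) = 1 - conj a * a by ring] at hd

lemma hasDerivAt_diskMobius_zero (a : ℂ) :
    HasDerivAt (diskMobius a) ((1 - ‖a‖ ^ 2 : ℝ) : ℂ) 0 := by
  simpa [conj_mul'] using hasDerivAt_diskMobius (a := a) (w := 0) (by simp)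

lemma hasDerivAt_diskMobius_neg_self (ha : ‖a‖ < 1) :
    HasDerivAt (diskMobius (-a)) ((1 - ‖a‖ ^ 2 : ℝ) : ℂ)⁻¹ a := by
  have hnum : 1 - conj (-a) * -a = ((1 - ‖a‖ ^ 2 : ℝ) : ℂ) := by simp [conj_mul']
  have hden : 1 + conj (-a) * a = ((1 - ‖a‖ ^ 2 : ℝ) : ℂ) := by
    simp [conj_mul', sub_eq_add_neg]
  have hne : ((1 - ‖a‖ ^ 2 : ℝ) : ℂ) ≠ 0 := by
    norm_cast; nlinarith [norm_nonneg a]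
  refine (hasDerivAt_diskMobius (hden ▸ hne)).congr_deriv ?_
  rw [hnum, hden]
  field_simp

lemma differentiableOn_diskMobius (ha : ‖a‖ < 1) : DifferentiableOn ℂ (diskMobius a) (ball 0 1) :=
  fun _ hw ↦ (hasDerivAt_diskMobius
    (one_add_conj_mul_ne_zero ha (mem_ball_zero_iff.mp hw))).differentiableAt.differentiableWithinAt

end diskMobius

theorem norm_deriv_mul_one_sub_sq_le_of_mapsTo_ball {g : ℂ → ℂ}
    (hd : DifferentiableOn ℂ g (ball 0 1)) (hm : MapsTo g (ball 0 1) (ball 0 1)) {z : ℂ}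
    (hz : ‖z‖ < 1) : ‖deriv g z‖ * (1 - ‖z‖ ^ 2) ≤ 1 - ‖g z‖ ^ 2 := by
  set a := g z
  have hz' : z ∈ ball (0 : ℂ) 1 := mem_ball_zero_iff.mpr hz
  have ha : ‖a‖ < 1 := mem_ball_zero_iff.mp (hm hz')
  have ha' : ‖-a‖ < 1 := by rwa [norm_neg]
  -- `h` is `g` conjugated by disk automorphisms so that it fixes the origin
  let h := diskMobius (-a) ∘ g ∘ diskMobius z
  have h_maps : MapsTo h (ball 0 1) (ball 0 1) :=
    (mapsTo_diskMobius ha').comp (hm.comp (mapsTo_diskMobius hz))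
  have h_diff : DifferentiableOn ℂ h (ball 0 1) :=
    (differentiableOn_diskMobius ha').comp (hd.comp (differentiableOn_diskMobius hz)
      (mapsTo_diskMobius hz)) (hm.comp (mapsTo_diskMobius hz))
  have h_zero : h 0 = 0 := by simp [h, a]
  have hg : HasDerivAt g (deriv g (diskMobius z 0)) (diskMobius z 0) := by
    simpa using (hd.differentiableAt (isOpen_ball.mem_nhds hz')).hasDerivAt
  have h_deriv : HasDerivAt h
      (((1 - ‖a‖ ^ 2 : ℝ) : ℂ)⁻¹ * (deriv g z * ((1 - ‖z‖ ^ 2 : ℝ) : ℂ))) 0 := by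
    have hφa : HasDerivAt (diskMobius (-a)) ((1 - ‖a‖ ^ 2 : ℝ) : ℂ)⁻¹ (g (diskMobius z 0)) := by
      simpa using hasDerivAt_diskMobius_neg_self ha
    simpa using hφa.comp 0 (hg.comp 0 (hasDerivAt_diskMobius_zero z))
  have hschwarz := Complex.norm_deriv_le_one_of_mapsTo_ball h_diff
    (by rw [h_zero]; exact h_maps.mono_right ball_subset_closedBall) one_pos
  have ha2 : 0 < 1 - ‖a‖ ^ 2 := by nlinarith [norm_nonneg a]
  have hz2 : 0 ≤ 1 - ‖z‖ ^ 2 := by nlinarith [norm_nonneg z]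
  rwa [h_deriv.deriv, norm_mul, norm_mul, norm_inv, Complex.norm_real, Complex.norm_real,
    Real.norm_of_nonneg ha2.le, Real.norm_of_nonneg hz2, inv_mul_le_iff₀ ha2, mul_one]
    at hschwarz

theorem norm_mul_norm_deriv_lt_one_sub_norm_of_mapsTo_ball {g : ℂ → ℂ}
    (hd : DifferentiableOn ℂ g (ball 0 1)) (hm : MapsTo g (ball 0 1) (ball 0 1)) (hg0 : g 0 = 0)
    {z : ℂ} (hz : ‖z‖ < 1 / 2) : ‖z‖ * ‖deriv g z‖ < 1 - ‖g z‖ := by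
  have hz1 : ‖z‖ < 1 := by linarith
  have hschwarz : ‖g z‖ ≤ ‖z‖ :=
    Complex.norm_le_norm_of_mapsTo_ball hd (hm.mono_right ball_subset_closedBall) hg0 hz1
  have hpick := norm_deriv_mul_one_sub_sq_le_of_mapsTo_ball hd hm hz1
  have hderiv : ‖deriv g z‖ * (1 - ‖z‖) ≤ 1 - ‖g z‖ := by
    have h1r : 0 < 1 + ‖z‖ := by linarith [norm_nonneg z]
    refine le_of_mul_le_mul_right ?_ h1r
    calc ‖deriv g z‖ * (1 - ‖z‖) * (1 + ‖z‖) = ‖deriv g z‖ * (1 - ‖z‖ ^ 2) := by ring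
      _ ≤ (1 - ‖g z‖) * (1 + ‖g z‖) := by linarith
      _ ≤ (1 - ‖g z‖) * (1 + ‖z‖) := by gcongr; linarith
  nlinarith [norm_nonneg z, norm_nonneg (deriv g z)]

theorem norm_mul_deriv_div_one_add_lt_one_of_mapsTo_ball {g : ℂ → ℂ}
    (hd : DifferentiableOn ℂ g (ball 0 1)) (hm : MapsTo g (ball 0 1) (ball 0 1)) (hg0 : g 0 = 0)
    {z : ℂ} (hz : ‖z‖ < 1 / 2) : ‖z * deriv g z / (1 + g z)‖ < 1 := by
  have hgz : ‖g z‖ < 1 := mem_ball_zero_iff.mp (hm (mem_ball_zero_iff.mpr (by linarith)))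
  have hden : 1 - ‖g z‖ ≤ ‖1 + g z‖ := by
    simpa using norm_sub_norm_le (1 : ℂ) (-g z)
  rw [norm_div, norm_mul, div_lt_one (by linarith)]
  linarith [norm_mul_norm_deriv_lt_one_sub_norm_of_mapsTo_ball hd hm hg0 hz]

theorem convex_half_disk_criterion_general (f : ℂ → ℂ)
    (hf : AnalyticOn ℂ f (Metric.ball (0 : ℂ) 1))
    (hf1 : deriv f 0 = 1)
    (hbound : ∀ z : ℂ, ‖z‖ < 1 → ‖deriv f z - 1‖ < 1) :
    ∀ z : ℂ, ‖z‖ < 1 / 2 →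
      0 < (1 + z * deriv (deriv f) z / deriv f z).re := by
  intro z hz
  let g := fun w ↦ deriv f w - 1
  have hd : DifferentiableOn ℂ g (ball 0 1) :=
    (hf.differentiableOn.deriv isOpen_ball).sub_const 1
  have hm : MapsTo g (ball 0 1) (ball 0 1) := fun w hw ↦
    mem_ball_zero_iff.mpr (hbound w (mem_ball_zero_iff.mp hw))
  have hg0 : g 0 = 0 := by simp [g, hf1]
  have hw := norm_mul_deriv_div_one_add_lt_one_of_mapsTo_ball hd hm hg0 hz
  rw [show deriv g z = deriv (deriv f) z from deriv_sub_const _, add_sub_cancel] at hw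
  rw [add_re, one_re]
  linarith [neg_le_of_abs_le (abs_re_le_norm (z * deriv (deriv f) z / deriv f z))]

theorem convex_half_disk_criterion (f : ℂ → ℂ)
    (hf : AnalyticOn ℂ f (Metric.ball (0 : ℂ) 1))
    (hf0 : f 0 = 0) (hf1 : deriv f 0 = 1)
    (hbound : ∀ z : ℂ, ‖z‖ < 1 → ‖deriv f z - 1‖ < 1) :
    ∀ z : ℂ, ‖z‖ < 1 / 2 →
      0 < (1 + z * deriv (deriv f) z / deriv f z).re :=
  convex_half_disk_criterion_general f hf hf1 hbound
end
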